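/- arXiv:1004.4264 — 2 statements merged into one kernel-verified Lean document; each statement's English description precedes it below -/
import Mathlib

section
/- Let Z be a nonempty finite type and P : Z → Z → ℝ a row-stochastic matrix that is irreducible. Then for all states a, w ∈ Z, the sequence m ↦ ∑ Prob(x), summed over all paths x of length m with x₀ = a and x_i ≠ w for all 0 ≤ i ≤ m, tends to 0 as m → ∞. -/
open scoped Classical

/-- Probability of a path `x = (x₀, …, x_m)` of length `m`:
`Prob(x) = ∏_{i=1}^m P(x_{i-1}, x_i)`. -/
def pathProb {Z : Type*} (P : Z → Z → ℝ) {m : ℕ} (x : Fin (m + 1) → Z) : ℝ :=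
  ∏ i : Fin m, P (x i.castSucc) (x i.succ)

/-- `P` is a row-stochastic matrix. -/
def RowStochastic {Z : Type*} [Fintype Z] (P : Z → Z → ℝ) : Prop :=
  (∀ a b, 0 ≤ P a b) ∧ ∀ a, ∑ b, P a b = 1

/-- The chain is irreducible: for all `a b` there is `m ≥ 1` with `(P^m)(a,b) > 0`. -/
def IsIrreducibleChain {Z : Type*} [Fintype Z] [DecidableEq Z] (P : Z → Z → ℝ) : Prop :=
  ∀ a b : Z, ∃ m : ℕ, 1 ≤ m ∧ 0 < (Matrix.of P ^ m) a b

set_option linter.unusedSectionVars false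

section aux
variable {Z : Type*} [Fintype Z] [DecidableEq Z]

noncomputable def Mf (P : Z → Z → ℝ) (w : Z) : Z → Z → ℝ :=
  fun a b => if a ≠ w ∧ b ≠ w then P a b else 0

lemma Mf_nonneg (P : Z → Z → ℝ) (w : Z) (hP : ∀ a b, 0 ≤ P a b) (a b : Z) :
    0 ≤ Mf P w a b := by
  unfold Mf; split <;> simp [hP a b]

lemma Mf_le (P : Z → Z → ℝ) (w : Z) (hP : ∀ a b, 0 ≤ P a b) (a b : Z) :
    Mf P w a b ≤ P a b := by
  unfold Mf; split <;> simp [hP a b]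

lemma Mf_apply_w (P : Z → Z → ℝ) (w a : Z) : Mf P w a w = 0 := by
  simp [Mf]

lemma pow_entry_nonneg (A : Matrix Z Z ℝ) (hA : ∀ a b, 0 ≤ A a b) :
    ∀ m a b, 0 ≤ (A ^ m) a b := by
  intro m
  induction m with
  | zero => intro a b; simp [Matrix.one_apply]; split <;> norm_num
  | succ n ih =>
    intro a b
    rw [pow_succ, Matrix.mul_apply]
    exact Finset.sum_nonneg fun c _ => mul_nonneg (ih a c) (hA c b)

lemma pow_entry_le (A B : Matrix Z Z ℝ) (hA : ∀ a b, 0 ≤ A a b)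
    (hB : ∀ a b, 0 ≤ B a b) (hAB : ∀ a b, A a b ≤ B a b) :
    ∀ m a b, (A ^ m) a b ≤ (B ^ m) a b := by
  intro m
  induction m with
  | zero => intro a b; simp
  | succ n ih =>
    intro a b
    rw [pow_succ, pow_succ, Matrix.mul_apply, Matrix.mul_apply]
    refine Finset.sum_le_sum fun c _ => ?_
    exact mul_le_mul (ih a c) (hAB c b) (hA c b) (pow_entry_nonneg B hB n a c)

lemma rowSum_pow_one (P : Z → Z → ℝ) (hP : RowStochastic P) (m : ℕ) (a : Z) :
    ∑ b, (Matrix.of P ^ m) a b = 1 := by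
  induction m generalizing a with
  | zero => simp [Matrix.one_apply]
  | succ n ih =>
    simp only [pow_succ, Matrix.mul_apply]
    rw [Finset.sum_comm]
    calc ∑ c, ∑ b, (Matrix.of P ^ n) a c * Matrix.of P c b
        = ∑ c, (Matrix.of P ^ n) a c * ∑ b, P c b := by
          simp [Finset.mul_sum, Matrix.of_apply]
      _ = ∑ c, (Matrix.of P ^ n) a c := by
          simp [hP.2]
      _ = 1 := ih a

noncomputable def Sav (P : Z → Z → ℝ) (w : Z) (m : ℕ) (a : Z) : ℝ :=
  ∑ b, (Matrix.of (Mf P w) ^ m) a b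

lemma Sav_nonneg (P : Z → Z → ℝ) (w : Z) (hP : ∀ a b, 0 ≤ P a b) (m : ℕ) (a : Z) :
    0 ≤ Sav P w m a :=
  Finset.sum_nonneg fun b _ =>
    pow_entry_nonneg _ (fun a b => Mf_nonneg P w hP a b) m a b

lemma Sav_add (P : Z → Z → ℝ) (w : Z) (m n : ℕ) (a : Z) :
    Sav P w (m + n) a = ∑ c, (Matrix.of (Mf P w) ^ m) a c * Sav P w n c := by
  unfold Sav
  rw [pow_add]
  simp only [Matrix.mul_apply]
  rw [Finset.sum_comm]
  simp [Finset.mul_sum]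

lemma Sav_le_one (P : Z → Z → ℝ) (w : Z) (hP : RowStochastic P) (m : ℕ) (a : Z) :
    Sav P w m a ≤ 1 := by
  calc Sav P w m a ≤ ∑ b, (Matrix.of P ^ m) a b := by
        refine Finset.sum_le_sum fun b _ => ?_
        exact pow_entry_le _ _ (fun a b => Mf_nonneg P w hP.1 a b)
          (fun a b => hP.1 a b) (fun a b => Mf_le P w hP.1 a b) m a b
    _ = 1 := rowSum_pow_one P hP m a

lemma Sav_anti (P : Z → Z → ℝ) (w : Z) (hP : RowStochastic P) (a : Z) :
    Antitone (fun m => Sav P w m a) := by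
  apply antitone_nat_of_succ_le
  intro m
  have : Sav P w (m + 1) a = ∑ c, (Matrix.of (Mf P w) ^ m) a c * Sav P w 1 c :=
    Sav_add P w m 1 a
  rw [this]
  calc ∑ c, (Matrix.of (Mf P w) ^ m) a c * Sav P w 1 c
      ≤ ∑ c, (Matrix.of (Mf P w) ^ m) a c * 1 := by
        refine Finset.sum_le_sum fun c _ => ?_
        exact mul_le_mul_of_nonneg_left (Sav_le_one P w hP 1 c)
          (pow_entry_nonneg _ (fun a b => Mf_nonneg P w hP.1 a b) m a c)
    _ = Sav P w m a := by simp [Sav]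

lemma Mf_pow_w (P : Z → Z → ℝ) (w : Z) (m : ℕ) (hm : 1 ≤ m) (a : Z) :
    (Matrix.of (Mf P w) ^ m) a w = 0 := by
  obtain ⟨k, rfl⟩ := Nat.exists_eq_add_of_le hm
  rw [add_comm, pow_succ, Matrix.mul_apply]
  refine Finset.sum_eq_zero fun c _ => ?_
  simp [Mf_apply_w]

end aux

section aux2
variable {Z : Type*} [Fintype Z] [DecidableEq Z]

lemma pathProb_cons (Q : Z → Z → ℝ) {m : ℕ} (b : Z) (y : Fin (m + 1) → Z) :
    pathProb Q (Fin.cons b y : Fin (m + 1 + 1) → Z) = Q b (y 0) * pathProb Q y := by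
  unfold pathProb
  rw [Fin.prod_univ_succ]
  congr 1

lemma path_sum (Q : Z → Z → ℝ) :
    ∀ (m : ℕ) (a : Z),
      ∑ x ∈ Finset.univ.filter (fun x : Fin (m + 1) → Z => x 0 = a), pathProb Q x
        = ∑ b, (Matrix.of Q ^ m) a b := by
  intro m
  induction m with
  | zero =>
    intro a
    rw [Finset.sum_filter]
    rw [← (Equiv.funUnique (Fin 1) Z).symm.sum_comp]
    simp [pathProb, Matrix.one_apply, Equiv.funUnique]
  | succ n ih =>
    intro a
    rw [Finset.sum_filter]
    have key : ∑ x : Fin (n + 1 + 1) → Z, (if x 0 = a then pathProb Q x else 0)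
        = ∑ p : Z × (Fin (n + 1) → Z),
            (if p.1 = a then Q p.1 (p.2 0) * pathProb Q p.2 else 0) := by
      rw [← ((Fin.consEquiv (fun _ : Fin (n + 1 + 1) => Z))).sum_comp]
      refine Finset.sum_congr rfl fun p _ => ?_
      have hp : (Fin.consEquiv (fun _ : Fin (n + 1 + 1) => Z)) p = Fin.cons p.1 p.2 := rfl
      rw [hp, Fin.cons_zero, pathProb_cons]
    rw [key, Fintype.sum_prod_type]
    have key2 : ∀ b : Z, (∑ y : Fin (n + 1) → Z,
        if b = a then Q b (y 0) * pathProb Q y else 0)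
        = if b = a then ∑ y : Fin (n + 1) → Z, Q b (y 0) * pathProb Q y else 0 := by
      intro b; split <;> simp
    simp only [key2]
    rw [Finset.sum_ite_eq' Finset.univ a
      (fun b => ∑ y : Fin (n + 1) → Z, Q b (y 0) * pathProb Q y)]
    simp only [Finset.mem_univ, if_true]
    rw [← Finset.sum_fiberwise Finset.univ (fun y : Fin (n + 1) → Z => y 0)
      (fun y => Q a (y 0) * pathProb Q y)]
    have key3 : ∀ b : Z, ∑ y ∈ Finset.univ.filter (fun y : Fin (n + 1) → Z => y 0 = b),
        Q a (y 0) * pathProb Q y = Q a b * ∑ c, (Matrix.of Q ^ n) b c := by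
      intro b
      rw [← ih b, Finset.mul_sum]
      refine Finset.sum_congr rfl fun y hy => ?_
      rw [(Finset.mem_filter.mp hy).2]
    simp only [key3]
    rw [pow_succ']
    simp only [Matrix.mul_apply]
    rw [Finset.sum_comm]
    simp [Finset.mul_sum, Matrix.of_apply]

end aux2

theorem stmt_2 {Z : Type*} [Fintype Z] [Nonempty Z] [DecidableEq Z] (P : Z → Z → ℝ)
    (hP : RowStochastic P) (hirr : IsIrreducibleChain P) (a w : Z) :
    Filter.Tendsto
      (fun m : ℕ => ∑ x ∈ Finset.univ.filter
          (fun x : Fin (m + 1) → Z => x 0 = a ∧ ∀ i, x i ≠ w),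
        pathProb P x)
      Filter.atTop (nhds 0) := by
  classical
  have hMnn : ∀ b d : Z, 0 ≤ Mf P w b d := Mf_nonneg P w hP.1
  -- for each state there is a time with avoidance mass < 1
  have hex : ∀ b : Z, ∃ m : ℕ, 1 ≤ m ∧ Sav P w m b < 1 := by
    intro b
    obtain ⟨m, hm1, hpos⟩ := hirr b w
    refine ⟨m, hm1, ?_⟩
    have h1 : Sav P w m b
        = ∑ c ∈ Finset.univ.erase w, (Matrix.of (Mf P w) ^ m) b c := by
      unfold Sav
      rw [← Finset.sum_erase_add _ _ (Finset.mem_univ w), Mf_pow_w P w m hm1 b, add_zero]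
    have h2 : ∑ c ∈ Finset.univ.erase w, (Matrix.of (Mf P w) ^ m) b c
        ≤ ∑ c ∈ Finset.univ.erase w, (Matrix.of P ^ m) b c := by
      refine Finset.sum_le_sum fun c _ => ?_
      exact pow_entry_le _ _ hMnn hP.1 (Mf_le P w hP.1) m b c
    have h3 : ∑ c ∈ Finset.univ.erase w, (Matrix.of P ^ m) b c
        + (Matrix.of P ^ m) b w = 1 := by
      rw [Finset.sum_erase_add _ _ (Finset.mem_univ w)]
      exact rowSum_pow_one P hP m b
    rw [h1]
    linarith
  choose f hf1 hf2 using hex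
  set N := Finset.univ.sup f with hNdef
  have hNpos : 0 < N := by
    obtain ⟨b⟩ := ‹Nonempty Z›
    exact lt_of_lt_of_le (hf1 b) (Finset.le_sup (Finset.mem_univ b))
  set c := Finset.univ.sup' Finset.univ_nonempty (fun b => Sav P w N b) with hcdef
  have hc1 : c < 1 := by
    rw [hcdef, Finset.sup'_lt_iff]
    intro b _
    exact lt_of_le_of_lt
      (Sav_anti P w hP b (Finset.le_sup (Finset.mem_univ b))) (hf2 b)
  have hcS : ∀ b : Z, Sav P w N b ≤ c :=
    fun b => Finset.le_sup' (fun b => Sav P w N b) (Finset.mem_univ b)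
  have hc0 : 0 ≤ c := by
    obtain ⟨b⟩ := ‹Nonempty Z›
    exact le_trans (Sav_nonneg P w hP.1 N b) (hcS b)
  have hgeo : ∀ (k : ℕ) (b : Z), Sav P w (k * N) b ≤ c ^ k := by
    intro k
    induction k with
    | zero => intro b; simp [Sav, Matrix.one_apply]
    | succ k ih =>
      intro b
      have he : (k + 1) * N = k * N + N := by ring
      rw [he, Sav_add]
      calc ∑ d, (Matrix.of (Mf P w) ^ (k * N)) b d * Sav P w N d
          ≤ ∑ d, (Matrix.of (Mf P w) ^ (k * N)) b d * c := by
            refine Finset.sum_le_sum fun d _ => ?_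
            exact mul_le_mul_of_nonneg_left (hcS d)
              (pow_entry_nonneg _ hMnn (k * N) b d)
        _ = Sav P w (k * N) b * c := by rw [← Finset.sum_mul]; rfl
        _ ≤ c ^ k * c := mul_le_mul_of_nonneg_right (ih b) hc0
        _ = c ^ (k + 1) := (pow_succ c k).symm
  have hSbound : ∀ m : ℕ, Sav P w m a ≤ c ^ (m / N) := by
    intro m
    calc Sav P w m a ≤ Sav P w (m / N * N) a :=
          Sav_anti P w hP a (Nat.div_mul_le_self m N)
      _ ≤ c ^ (m / N) := hgeo (m / N) a
  have hdiv : Filter.Tendsto (fun m : ℕ => m / N) Filter.atTop Filter.atTop :=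
    Filter.tendsto_atTop_atTop.2 fun b =>
      ⟨b * N, fun m hm => (Nat.le_div_iff_mul_le hNpos).2 hm⟩
  have hg : Filter.Tendsto (fun m : ℕ => c ^ (m / N)) Filter.atTop (nhds 0) :=
    (tendsto_pow_atTop_nhds_zero_of_lt_one hc0 hc1).comp hdiv
  refine squeeze_zero (fun m => ?_) (fun m => ?_) hg
  · exact Finset.sum_nonneg fun x _ =>
      Finset.prod_nonneg fun i _ => hP.1 _ _
  · -- target ≤ Sav ≤ c ^ (m / N)
    refine le_trans ?_ (hSbound m)
    have hrw : ∑ x ∈ Finset.univ.filter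
          (fun x : Fin (m + 1) → Z => x 0 = a ∧ ∀ i, x i ≠ w), pathProb P x
        = ∑ x ∈ Finset.univ.filter
          (fun x : Fin (m + 1) → Z => x 0 = a ∧ ∀ i, x i ≠ w), pathProb (Mf P w) x := by
      refine Finset.sum_congr rfl fun x hx => ?_
      obtain ⟨-, hxw⟩ := Finset.mem_filter.mp hx
      unfold pathProb
      refine Finset.prod_congr rfl fun i _ => ?_
      simp [Mf, hxw.2 i.castSucc, hxw.2 i.succ]
    rw [hrw]
    have hps : ∑ x ∈ Finset.univ.filter
        (fun x : Fin (m + 1) → Z => x 0 = a), pathProb (Mf P w) x = Sav P w m a :=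
      path_sum (Mf P w) m a
    rw [← hps]
    refine Finset.sum_le_sum_of_subset_of_nonneg ?_ ?_
    · intro x hx
      simp only [Finset.mem_filter, Finset.mem_univ, true_and] at hx ⊢
      exact hx.1
    · intro x _ _
      exact Finset.prod_nonneg fun i _ => hMnn _ _
end

section
/- Let Z be a nonempty finite type, P : Z → Z → ℝ a row-stochastic matrix that is irreducible, and W ⊆ Z with at least two elements. Then the factor chain M/W is irreducible: for all a, b ∈ W there exists m ≥ 1 with (P̄^m)(a,b) > 0, where P̄ is the factor-chain transition matrix on W and P̄^m is its m-th matrix power. -/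
open scoped Classical

/-- The probability `P(R^W_{a,b})` of the set of `W`-arrows from `a` to `b`:
the sum over all lengths `m ≥ 1` of the probabilities of paths `x` of length `m`
with `x₀ = a`, `x_m = b`, and `x_i ∈ W → x_i = a` for every `i < m`. -/
noncomputable def arrowProb {Z : Type*} [Fintype Z] (P : Z → Z → ℝ) (W : Finset Z)
    (a b : Z) : ℝ :=
  ∑' m : ℕ, ∑ x ∈ Finset.univ.filter (fun x : Fin (m + 1 + 1) → Z =>
      x 0 = a ∧ x (Fin.last (m + 1)) = b ∧
      ∀ i : Fin (m + 1 + 1), i < Fin.last (m + 1) → x i ∈ W → x i = a),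
    pathProb P x

/-- The transition matrix `P̄` of the factor chain `M/W`, a matrix indexed by the
states of `W`: `P̄(a,b) = P(R^W_{a,b})` for `a ≠ b` and `P̄(a,a) = 0`. -/
noncomputable def factorMatrix {Z : Type*} [Fintype Z] (P : Z → Z → ℝ) (W : Finset Z) :
    Matrix {z : Z // z ∈ W} {z : Z // z ∈ W} ℝ :=
  Matrix.of fun a b => if (a : Z) = (b : Z) then 0 else arrowProb P W (a : Z) (b : Z)

/-!
Cut a positive-probability path of `P` at its successive visits to `W`: each piece between two
distinct visited states of `W` is a `W`-arrow of positive probability, so irreducibility of `P`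
makes the positivity graph of `P̄` strongly connected among distinct states, and a diagonal entry
is reached through a second state of `W`.

The analytic point is that `P(R^W_{a,b})` is a convergent series when `a ≠ b` lie in `W`. The
arrows of length `n + 1` are the one-step extensions to `b` of the paths of length `n` from `a`
that meet `W` only at `a` (the arrow prefixes); as `b` is not an admissible next state for a
prefix, the mass of these arrows plus that of the prefixes of length `n + 1` is at most the mass
of the prefixes of length `n`, and this telescopes to a bound by `1`.
-/

open Finset Relation

namespace Matrix

variable {n R : Type*} [Fintype n] [DecidableEq n] [Semiring R] [LinearOrder R]
  [IsStrictOrderedRing R] {A : Matrix n n R}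

lemma pow_succ_apply_pos_iff (hA : ∀ i j, 0 ≤ A i j) (k : ℕ) (i j : n) :
    0 < (A ^ (k + 1)) i j ↔ ∃ l, 0 < (A ^ k) i l ∧ 0 < A l j := by
  have hterm : ∀ l, 0 ≤ (A ^ k) i l * A l j :=
    fun l => mul_nonneg (pow_apply_nonneg hA k i l) (hA l j)
  rw [pow_succ, mul_apply, sum_pos_iff_of_nonneg fun l _ => hterm l]
  refine exists_congr fun l => ⟨fun ⟨_, h⟩ => ?_, fun h => ⟨mem_univ l, mul_pos h.1 h.2⟩⟩
  exact ⟨pos_of_mul_pos_left h (hA l j), pos_of_mul_pos_right h (pow_apply_nonneg hA k i l)⟩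

theorem exists_pow_apply_pos_iff_transGen (hA : ∀ i j, 0 ≤ A i j) {i j : n} :
    (∃ k, 1 ≤ k ∧ 0 < (A ^ k) i j) ↔ TransGen (fun i j => 0 < A i j) i j := by
  constructor
  · rintro ⟨k, hk, hpos⟩
    induction k, hk using Nat.le_induction generalizing j with
    | base => exact .single (by simpa using hpos)
    | succ k _ ih =>
      obtain ⟨l, hil, hlj⟩ := (pow_succ_apply_pos_iff hA k i j).1 hpos
      exact (ih hil).tail hlj
  · intro h
    induction h with
    | single hij => exact ⟨1, le_rfl, by simpa using hij⟩
    | tail _ hbc ih =>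
      obtain ⟨k, hk, hpos⟩ := ih
      exact ⟨k + 1, by omega, (pow_succ_apply_pos_iff hA k _ _).2 ⟨_, hpos, hbc⟩⟩

end Matrix

section PathProb

variable {Z : Type*} {P : Z → Z → ℝ}

lemma pathProb_nonneg (h0 : ∀ a b, 0 ≤ P a b) {n : ℕ} (x : Fin (n + 1) → Z) :
    0 ≤ pathProb P x :=
  prod_nonneg fun _ _ => h0 _ _

lemma pathProb_snoc {n : ℕ} (y : Fin (n + 1) → Z) (z : Z) :
    pathProb P (Fin.snoc y z : Fin (n + 2) → Z) = pathProb P y * P (y (Fin.last n)) z := by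
  simp [pathProb, Fin.prod_univ_castSucc, Fin.snoc_castSucc, Fin.succ_castSucc,
    -Fin.castSucc_succ]

lemma sum_pathProb_of_snoc_mem_iff {n : ℕ} {t : Finset (Fin (n + 2) → Z)}
    {s : Finset (Fin (n + 1) → Z)} {u : Finset Z}
    (h : ∀ y z, (Fin.snoc y z : Fin (n + 2) → Z) ∈ t ↔ y ∈ s ∧ z ∈ u) :
    ∑ x ∈ t, pathProb P x = ∑ y ∈ s, pathProb P y * ∑ z ∈ u, P (y (Fin.last n)) z := by
  calc ∑ x ∈ t, pathProb P x
      = ∑ p ∈ s ×ˢ u, pathProb P (Fin.snoc p.1 p.2 : Fin (n + 2) → Z) := by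
        refine sum_nbij' (fun x => (Fin.init x, x (Fin.last _))) (fun p => Fin.snoc p.1 p.2)
          ?_ ?_ ?_ ?_ ?_ <;> simp [← h]
    _ = _ := by simp [sum_product, pathProb_snoc, mul_sum]

end PathProb

noncomputable section FactorChain

variable {Z : Type*} [Fintype Z] (P : Z → Z → ℝ) (W : Finset Z) (a b : Z)

def arrowPrefixes (n : ℕ) : Finset (Fin (n + 1) → Z) :=
  univ.filter fun x => x 0 = a ∧ ∀ i, x i ∈ W → x i = a

lemma snoc_mem_arrowPrefixes {n : ℕ} (y : Fin (n + 1) → Z) (z : Z) :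
    (Fin.snoc y z : Fin (n + 2) → Z) ∈ arrowPrefixes W a (n + 1) ↔
      y ∈ arrowPrefixes W a n ∧ z ∈ univ.filter (fun z => z ∈ W → z = a) := by
  simp [arrowPrefixes, Fin.forall_fin_succ' (n := n + 1), Fin.snoc_apply_zero, and_assoc]

-- The `n`-th term of `arrowProb`: arrows of length `n + 1`.
def arrowMass (n : ℕ) : ℝ :=
  ∑ y ∈ arrowPrefixes W a n, pathProb P y * P (y (Fin.last n)) b

lemma arrowProb_eq_tsum_arrowMass : arrowProb P W a b = ∑' n, arrowMass P W a b n := by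
  refine tsum_congr fun n => ?_
  rw [sum_pathProb_of_snoc_mem_iff (s := arrowPrefixes W a n) (u := {b})]
  · simp [arrowMass]
  · intro y z
    simp [arrowPrefixes, Fin.forall_fin_succ' (n := n + 1), Fin.snoc_apply_zero, and_assoc,
      and_comm (a := z = b)]

def prefixMass (n : ℕ) : ℝ :=
  ∑ x ∈ arrowPrefixes W a n, pathProb P x

lemma prefixMass_zero : prefixMass P W a 0 = 1 := by
  have : arrowPrefixes W a 0 = {fun _ => a} := by
    ext x
    simp +contextual [arrowPrefixes, funext_iff, Fin.forall_fin_one]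
  simp [prefixMass, this, pathProb]

lemma prefixMass_succ (n : ℕ) :
    prefixMass P W a (n + 1) = ∑ y ∈ arrowPrefixes W a n,
      pathProb P y * ∑ z ∈ univ.filter (fun z => z ∈ W → z = a), P (y (Fin.last n)) z :=
  sum_pathProb_of_snoc_mem_iff (snoc_mem_arrowPrefixes W a)

variable {P W a b}

lemma prefixMass_nonneg (h0 : ∀ a b, 0 ≤ P a b) (n : ℕ) : 0 ≤ prefixMass P W a n :=
  sum_nonneg fun x _ => pathProb_nonneg h0 x

lemma arrowMass_nonneg (h0 : ∀ a b, 0 ≤ P a b) (n : ℕ) : 0 ≤ arrowMass P W a b n :=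
  sum_nonneg fun y _ => mul_nonneg (pathProb_nonneg h0 y) (h0 _ _)

lemma RowStochastic.add_sum_le_one (hP : RowStochastic P) (c : Z) {s : Finset Z} (hb : b ∉ s) :
    P c b + ∑ z ∈ s, P c z ≤ 1 := by
  rw [← sum_insert hb, ← hP.2 c]
  exact sum_le_univ_sum_of_nonneg (hP.1 c)

lemma arrowMass_add_prefixMass_succ_le (hP : RowStochastic P) (hb : b ∈ W) (hba : b ≠ a)
    (n : ℕ) : arrowMass P W a b n + prefixMass P W a (n + 1) ≤ prefixMass P W a n := by
  rw [arrowMass, prefixMass_succ, ← sum_add_distrib]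
  refine sum_le_sum fun y _ => ?_
  rw [← mul_add]
  exact mul_le_of_le_one_right (pathProb_nonneg hP.1 y)
    (hP.add_sum_le_one _ (by simp [hb, hba]))

lemma sum_range_arrowMass_add_prefixMass_le (hP : RowStochastic P) (hb : b ∈ W) (hba : b ≠ a)
    (N : ℕ) : ∑ n ∈ range N, arrowMass P W a b n + prefixMass P W a N ≤ 1 := by
  induction N with
  | zero => simp [prefixMass_zero]
  | succ N ih =>
    have := arrowMass_add_prefixMass_succ_le hP hb hba N
    rw [sum_range_succ]
    linarith

lemma summable_arrowMass (hP : RowStochastic P) (hb : b ∈ W) (hba : b ≠ a) :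
    Summable (arrowMass P W a b) :=
  summable_of_sum_range_le (c := 1) (arrowMass_nonneg hP.1) fun N => by
    linarith [sum_range_arrowMass_add_prefixMass_le hP hb hba N,
      prefixMass_nonneg (W := W) (a := a) hP.1 N]

variable (P W a b)

def HasPosArrow : Prop :=
  ∃ n, ∃ y ∈ arrowPrefixes W a n, 0 < pathProb P y * P (y (Fin.last n)) b

variable {P W a b}

lemma hasPosArrow_of_pos (h : 0 < P a b) : HasPosArrow P W a b :=
  ⟨0, fun _ => a, by simp [arrowPrefixes], by simpa [pathProb] using h⟩

lemma HasPosArrow.snoc {c : Z} (hab : HasPosArrow P W a b) (hb : b ∈ W → b = a)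
    (hbc : 0 < P b c) : HasPosArrow P W a c := by
  obtain ⟨n, y, hy, hpos⟩ := hab
  refine ⟨n + 1, Fin.snoc y b, (snoc_mem_arrowPrefixes W a y b).2 ⟨hy, by simpa using hb⟩, ?_⟩
  rw [pathProb_snoc, Fin.snoc_last]
  exact mul_pos hpos hbc

-- `arrowProb` is a `tsum`, hence `0` for a divergent series: positivity needs summability.
lemma arrowProb_pos (hP : RowStochastic P) (hb : b ∈ W) (hba : b ≠ a)
    (h : HasPosArrow P W a b) : 0 < arrowProb P W a b := by
  obtain ⟨n, y, hy, hpos⟩ := h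
  rw [arrowProb_eq_tsum_arrowMass]
  exact (summable_arrowMass hP hb hba).tsum_pos (arrowMass_nonneg hP.1) n
    (sum_pos' (fun y _ => mul_nonneg (pathProb_nonneg hP.1 y) (hP.1 _ _)) ⟨y, hy, hpos⟩)

lemma factorMatrix_nonneg (h0 : ∀ a b, 0 ≤ P a b) (i j : {z // z ∈ W}) :
    0 ≤ factorMatrix P W i j := by
  rw [factorMatrix, Matrix.of_apply, arrowProb_eq_tsum_arrowMass]
  split_ifs
  exacts [le_rfl, tsum_nonneg (arrowMass_nonneg h0)]

lemma factorMatrix_pos (hP : RowStochastic P) {i j : {z // z ∈ W}} (hij : i ≠ j)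
    (h : HasPosArrow P W i j) : 0 < factorMatrix P W i j := by
  have hij' : (i : Z) ≠ j := Subtype.coe_ne_coe.2 hij
  rw [factorMatrix, Matrix.of_apply, if_neg hij']
  exact arrowProb_pos hP j.2 hij'.symm h

end FactorChain

section Irreducibility

variable {Z : Type*} [Fintype Z] {P : Z → Z → ℝ} {W : Finset Z}

lemma exists_reflTransGen_hasPosArrow (hP : RowStochastic P) {a c : Z} (ha : a ∈ W)
    (h : TransGen (fun x y => 0 < P x y) a c) :
    ∃ d : {z // z ∈ W}, ReflTransGen (fun i j => 0 < factorMatrix P W i j) ⟨a, ha⟩ d ∧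
      HasPosArrow P W d c := by
  induction h with
  | single hac => exact ⟨⟨a, ha⟩, .refl, hasPosArrow_of_pos hac⟩
  | @tail c e _ hce ih =>
    obtain ⟨d, hreach, harrow⟩ := ih
    by_cases hc : c ∈ W ∧ c ≠ d
    · have hdc : 0 < factorMatrix P W d ⟨c, hc.1⟩ :=
        factorMatrix_pos hP (fun h => hc.2 (congrArg Subtype.val h).symm) harrow
      exact ⟨⟨c, hc.1⟩, hreach.tail hdc, hasPosArrow_of_pos hce⟩
    · exact ⟨d, hreach, harrow.snoc (fun hcW => not_and_not_right.1 hc hcW) hce⟩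

lemma transGen_factorMatrix_of_transGen (hP : RowStochastic P) {a b : {z // z ∈ W}}
    (hab : a ≠ b) (h : TransGen (fun x y => 0 < P x y) a b) :
    TransGen (fun i j => 0 < factorMatrix P W i j) a b := by
  obtain ⟨d, hreach, harrow⟩ := exists_reflTransGen_hasPosArrow hP a.2 h
  rcases eq_or_ne d b with rfl | hdb
  · exact (reflTransGen_iff_eq_or_transGen.1 hreach).resolve_left hab.symm
  · exact .tail' hreach (factorMatrix_pos hP hdb harrow)

end Irreducibility

theorem stmt_8_general {Z : Type*} [Fintype Z] [DecidableEq Z] (P : Z → Z → ℝ)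
    (hP : RowStochastic P) (hirr : IsIrreducibleChain P)
    (W : Finset Z) (hW : 2 ≤ W.card) :
    ∀ a b : {z : Z // z ∈ W}, ∃ m : ℕ, 1 ≤ m ∧ 0 < (factorMatrix P W ^ m) a b := by
  have hconn : ∀ a b : {z // z ∈ W}, a ≠ b →
      TransGen (fun i j => 0 < factorMatrix P W i j) a b := fun a b hab =>
    transGen_factorMatrix_of_transGen hP hab
      ((Matrix.exists_pow_apply_pos_iff_transGen hP.1).1 (hirr a b))
  intro a b
  rw [Matrix.exists_pow_apply_pos_iff_transGen (factorMatrix_nonneg hP.1)]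
  obtain ⟨c, hcW, hca⟩ := exists_mem_ne hW (a : Z)
  have hca' : (⟨c, hcW⟩ : {z // z ∈ W}) ≠ a := fun h => hca (congrArg Subtype.val h)
  rcases eq_or_ne a b with rfl | hab
  · exact (hconn a _ hca'.symm).trans (hconn _ a hca')
  · exact hconn a b hab

theorem stmt_8 {Z : Type*} [Fintype Z] [Nonempty Z] [DecidableEq Z] (P : Z → Z → ℝ)
    (hP : RowStochastic P) (hirr : IsIrreducibleChain P)
    (W : Finset Z) (hW : 2 ≤ W.card) :
    ∀ a b : {z : Z // z ∈ W}, ∃ m : ℕ, 1 ≤ m ∧ 0 < (factorMatrix P W ^ m) a b :=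
  stmt_8_general P hP hirr W hW
end
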